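/- Let a ∈ C_K with |a| > 1; set R = |a|^{−1/(p−1)}, μ = max(|p|, R), and S = μR³. Let m ≥ 1 and n ≥ 0 be integers, and let x ∈ C_K with |φ_a^n(x)| = R^{1−p^{−m}}. Let A > |a|^{−1} be a real number and let ε be a real number with 0 < ε ≤ A^{−1}S. Suppose that {Φ_n(b, x) : b ∈ D̄_ε(a)} ⊆ D̄_{Aε}(φ_a^n(x)) and that μ^m < A^{−1} R^{p+1}. Then the map b ↦ Φ_{n+m}(b, x) sends D̄_ε(a) bijectively onto D̄_{ε/|a|}(φ_a^{n+m}(x)). -/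

import Mathlib

/-!
Write `F_k(z) = φ_{a+z}^{n+k}(x)`, a polynomial in `z`, and measure it by the Gauss norm `‖·‖[ε]`.
It dominates `|F_k|` on `|z| ≤ ε` and, `K` being algebraically closed, equals its supremum there
(maximum principle), so the hypothesis on the image of `D̄_ε(a)` says `‖F_0 - F_0(0)‖[ε] ≤ Aε`.
Since `φ_b(T) = T^p (T + b (1 - T))`, one step sends a constant term of size `r_k < 1` to one of
size `r_{k+1} = |a| r_k^p`, so `r_k = R^{1 - p^{k-m}}` reaches `1` at `k = m`; the binomial
expansion of `(s + U)^p`, whose linear term carries the factor `p`, shows that the rest of `F_k`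
grows at most by the factor `|a| r_k^{p-1} max(r_k, |p|)`, plus a new linear term `s^p (1 - s) z`.
After `m` steps that linear coefficient has size `|a|⁻¹` and strictly dominates all other terms on
`D̄_ε`, so a Newton iteration, which is then a contraction, inverts `F_m` between the two disks.
-/

/-- The polynomial map `φ_a(z) = (1-a) z^(p+1) + a z^p`. -/
def phi {K : Type*} [Field K] (p : ℕ) (a : K) (z : K) : K :=
  (1 - a) * z ^ (p + 1) + a * z ^ p

open Polynomial Filter Topology Metric Set

local notation "‖" P "‖[" e "]" => Polynomial.gaussNorm (NormedField.toAbsoluteValue _) e P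

lemma exists_norm_mem_Ioo (K : Type*) [NontriviallyNormedField K] [IsAlgClosed K] {u v : ℝ}
    (hu : 0 < u) (huv : u < v) : ∃ t : K, u < ‖t‖ ∧ ‖t‖ < v := by
  obtain ⟨y, hy⟩ := NormedField.exists_one_lt_norm K
  obtain ⟨N, hN⟩ := pow_unbounded_of_one_lt ‖y‖ ((one_lt_div hu).2 huv)
  have hN0 : N ≠ 0 := by rintro rfl; rw [pow_zero] at hN; linarith
  -- an `N`-th root of `y` has norm in `(1, v / u)`, so consecutive powers of it are close
  obtain ⟨c, rfl⟩ := IsAlgClosed.exists_pow_nat_eq y (Nat.pos_of_ne_zero hN0)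
  rw [norm_pow] at hy hN
  have hc1 : 1 < ‖c‖ := (one_lt_pow_iff_of_nonneg (norm_nonneg c) hN0).1 hy
  have hcv : ‖c‖ < v / u :=
    (pow_lt_pow_iff_left₀ (norm_nonneg c) (div_pos (hu.trans huv) hu).le hN0).1 hN
  obtain ⟨k, hk, hk'⟩ := exists_mem_Ico_zpow hu hc1
  refine ⟨c ^ (k + 1), by rwa [norm_zpow], ?_⟩
  rw [norm_zpow, zpow_add_one₀ (by positivity)]
  calc ‖c‖ ^ k * ‖c‖ < u * (v / u) := mul_lt_mul' hk hcv (norm_nonneg c) hu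
    _ = v := by field_simp

lemma subsingleton_setOf_mul_pow_eq {a b : ℝ} (hb : 0 < b) {i j : ℕ} (hij : i < j) :
    {ρ : ℝ | 0 < ρ ∧ a * ρ ^ i = b * ρ ^ j}.Subsingleton := by
  have key : ∀ ρ : ℝ, 0 < ρ → a * ρ ^ i = b * ρ ^ j → ρ ^ (j - i) = a / b := by
    intro ρ hρ h
    rw [eq_div_iff hb.ne', ← mul_left_inj' (pow_pos hρ i).ne', h, ← pow_sub_mul_pow ρ hij.le]
    ring
  rintro ρ ⟨hρ, h⟩ ρ' ⟨hρ', h'⟩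
  exact (pow_left_inj₀ hρ.le hρ'.le (Nat.sub_ne_zero_of_lt hij)).1
    ((key ρ hρ h).trans (key ρ' hρ' h').symm)

namespace Polynomial

section GaussNorm

variable {K : Type*} [NormedField K] {P : K[X]} {e : ℝ}

lemma norm_coeff_mul_pow_le_gaussNorm (P : K[X]) (he : 0 ≤ e) (i : ℕ) :
    ‖P.coeff i‖ * e ^ i ≤ ‖P‖[e] :=
  P.le_gaussNorm (NormedField.toAbsoluteValue K) he i

lemma gaussNorm_le_of_forall_le {M : ℝ} (h : ∀ i, ‖P.coeff i‖ * e ^ i ≤ M) : ‖P‖[e] ≤ M := by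
  obtain ⟨i, hi⟩ := P.exists_eq_gaussNorm (NormedField.toAbsoluteValue K) e
  exact hi ▸ h i

lemma gaussNorm_C_eq_norm (r : K) : ‖C r‖[e] = ‖r‖ := gaussNorm_C _ _ r

lemma gaussNorm_X : ‖(X : K[X])‖[e] = e := by
  rw [← monomial_one_one_eq_X, gaussNorm_monomial]
  simp [NormedField.toAbsoluteValue]

lemma gaussNorm_neg (P : K[X]) : ‖-P‖[e] = ‖P‖[e] := by
  simp only [gaussNorm, support_neg, coeff_neg, map_neg_eq_map]

variable [IsUltrametricDist K]

lemma gaussNorm_add_le (he : 0 ≤ e) (P Q : K[X]) : ‖P + Q‖[e] ≤ max ‖P‖[e] ‖Q‖[e] :=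
  isNonarchimedean_gaussNorm _ IsUltrametricDist.isNonarchimedean_norm he P Q

lemma gaussNorm_sub_le (he : 0 ≤ e) (P Q : K[X]) : ‖P - Q‖[e] ≤ max ‖P‖[e] ‖Q‖[e] := by
  simpa only [sub_eq_add_neg, gaussNorm_neg] using gaussNorm_add_le he P (-Q)

lemma gaussNorm_mul_le' (he : 0 ≤ e) (P Q : K[X]) : ‖P * Q‖[e] ≤ ‖P‖[e] * ‖Q‖[e] :=
  gaussNorm_mul_le _ IsUltrametricDist.isNonarchimedean_norm P Q he

lemma norm_pow_sub_pow_mul_le {z w : K} (hz : ‖z‖ ≤ e) (hw : ‖w‖ ≤ e) (j : ℕ) :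
    ‖z ^ j - w ^ j‖ * e ≤ e ^ j * ‖z - w‖ := by
  have he : 0 ≤ e := (norm_nonneg z).trans hz
  rcases j with _ | j
  · simp
  have hsum : ‖∑ i ∈ Finset.range (j + 1), z ^ i * w ^ (j - i)‖ ≤ e ^ j := by
    refine IsUltrametricDist.norm_sum_le_of_forall_le_of_nonneg (by positivity) fun i hi => ?_
    have hij : i ≤ j := Nat.lt_succ_iff.mp (Finset.mem_range.mp hi)
    rw [norm_mul, norm_pow, norm_pow, ← Nat.add_sub_cancel' hij, pow_add, Nat.add_sub_cancel_left]
    gcongr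
  rw [← geom_sum₂_mul, norm_mul, pow_succ, Nat.add_sub_cancel]
  calc _ = ‖∑ i ∈ Finset.range (j + 1), z ^ i * w ^ (j - i)‖ * e * ‖z - w‖ := by ring
    _ ≤ e ^ j * e * ‖z - w‖ := by gcongr

lemma norm_eval_sub_eval_le (P : K[X]) (he : 0 < e) {z w : K} (hz : ‖z‖ ≤ e) (hw : ‖w‖ ≤ e) :
    ‖P.eval z - P.eval w‖ ≤ ‖P‖[e] / e * ‖z - w‖ := by
  rw [eval_eq_sum_range' (Nat.lt_succ_self _), eval_eq_sum_range' (Nat.lt_succ_self _),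
    ← Finset.sum_sub_distrib]
  refine IsUltrametricDist.norm_sum_le_of_forall_le_of_nonneg
    (by have := P.gaussNorm_nonneg (NormedField.toAbsoluteValue K) he.le; positivity)
    fun j _ => ?_
  rw [← mul_sub, norm_mul, div_mul_eq_mul_div, le_div_iff₀ he, mul_assoc]
  calc ‖P.coeff j‖ * (‖z ^ j - w ^ j‖ * e) ≤ ‖P.coeff j‖ * (e ^ j * ‖z - w‖) := by
        exact mul_le_mul_of_nonneg_left (norm_pow_sub_pow_mul_le hz hw j) (norm_nonneg _)
    _ ≤ ‖P‖[e] * ‖z - w‖ := by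
        rw [← mul_assoc]; gcongr; exact P.norm_coeff_mul_pow_le_gaussNorm he.le j

end GaussNorm

section TieRadii

variable {K : Type*} [NormedField K]

def tieRadii (P : K[X]) : Set ℝ :=
  {ρ | 0 < ρ ∧ ∃ i ∈ P.support, ∃ j ∈ P.support, i < j ∧
    ‖P.coeff i‖ * ρ ^ i = ‖P.coeff j‖ * ρ ^ j}

lemma finite_tieRadii (P : K[X]) : P.tieRadii.Finite := by
  have hsub : P.tieRadii ⊆ ⋃ q ∈ P.support ×ˢ P.support,
      {ρ : ℝ | 0 < ρ ∧ q.1 < q.2 ∧ ‖P.coeff q.1‖ * ρ ^ q.1 = ‖P.coeff q.2‖ * ρ ^ q.2} := by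
    rintro ρ ⟨hρ, i, hi, j, hj, hij, h⟩
    exact Set.mem_biUnion (x := (i, j)) (Finset.mem_product.2 ⟨hi, hj⟩) ⟨hρ, hij, h⟩
  refine (Set.Finite.biUnion (Finset.finite_toSet _) fun q hq => ?_).subset hsub
  by_cases hq' : q.1 < q.2
  · refine (subsingleton_setOf_mul_pow_eq (a := ‖P.coeff q.1‖) (norm_pos_iff.2 (mem_support_iff.1
      (Finset.mem_product.1 hq).2)) hq').finite.subset ?_
    exact fun ρ ⟨hρ, _, h⟩ => ⟨hρ, h⟩
  · exact Set.finite_empty.subset fun ρ ⟨_, h, _⟩ => hq' h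

variable [IsUltrametricDist K]

lemma norm_coeff_mul_pow_le_norm_eval (P : K[X]) {z : K} (hz : 0 < ‖z‖)
    (hzP : ‖z‖ ∉ P.tieRadii) (j : ℕ) : ‖P.coeff j‖ * ‖z‖ ^ j ≤ ‖P.eval z‖ := by
  by_cases hj : j ∈ P.support
  swap
  · rw [notMem_support_iff.1 hj, norm_zero, zero_mul]; exact norm_nonneg _
  obtain ⟨i₀, hi₀, hmax⟩ := P.support.exists_max_image (fun i => ‖P.coeff i‖ * ‖z‖ ^ i) ⟨j, hj⟩
  have hlt : ∀ i ∈ P.support, i ≠ i₀ → ‖P.coeff i * z ^ i‖ < ‖P.coeff i₀ * z ^ i₀‖ := by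
    intro i hi hne
    simp only [norm_mul, norm_pow]
    refine (hmax i hi).lt_of_ne fun heq => hzP ⟨hz, ?_⟩
    rcases hne.lt_or_gt with h | h
    · exact ⟨i, hi, i₀, hi₀, h, heq⟩
    · exact ⟨i₀, hi₀, i, hi, h, heq.symm⟩
  rw [eval_eq_sum, Polynomial.sum_def, IsUltrametricDist.isNonarchimedean_norm.apply_sum_eq_of_lt
    (fun x => (norm_neg x).symm) hi₀ hlt, norm_mul, norm_pow]
  exact hmax j hj

end TieRadii

section MaximumPrinciple

variable {K : Type*} [NontriviallyNormedField K] [IsUltrametricDist K] [IsAlgClosed K]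

/-- Away from the finitely many `tieRadii`, `‖P z‖` is the largest term `‖P_i‖ ‖z‖ ^ i`, and `K`
being algebraically closed, such values of `‖z‖` accumulate at `e`. -/
lemma gaussNorm_le_of_norm_eval_le (P : K[X]) {e M : ℝ} (he : 0 < e)
    (h : ∀ z : K, ‖z‖ ≤ e → ‖P.eval z‖ ≤ M) : ‖P‖[e] ≤ M := by
  refine gaussNorm_le_of_forall_le fun j => not_lt.1 fun hj => ?_
  have hbig : ∀ᶠ ρ in 𝓝[<] e, M < ‖P.coeff j‖ * ρ ^ j := nhdsWithin_le_nhds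
    (((continuous_const.mul (continuous_pow j)).tendsto e).eventually_const_lt hj)
  have hnotie : ∀ᶠ ρ in 𝓝[<] e, ρ ∉ P.tieRadii :=
    nhdsLT_le_nhdsNE e (nhdsNE_le_cofinite e P.finite_tieRadii.compl_mem_cofinite)
  have hpos : ∀ᶠ ρ in 𝓝[<] e, 0 < ρ := nhdsWithin_le_nhds (eventually_gt_nhds he)
  obtain ⟨β, hβ, hsub⟩ := mem_nhdsLT_iff_exists_Ioo_subset.1 (hbig.and (hnotie.and hpos))
  obtain ⟨t, htβ, hte⟩ := exists_norm_mem_Ioo K (lt_max_of_lt_right (half_pos he))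
    (max_lt hβ (half_lt_self he))
  obtain ⟨hM, htie, ht0⟩ := hsub ⟨(le_max_left _ _).trans_lt htβ, hte⟩
  exact (hM.trans_le (P.norm_coeff_mul_pow_le_norm_eval ht0 htie j)).not_ge (h t hte.le)

end MaximumPrinciple

end Polynomial

section Bijection

variable {K : Type*} [NormedField K] [IsUltrametricDist K]

lemma mapsTo_closedBall_of_norm_sub_sub_le {f : K → K} {a c : K} {ε κ : ℝ} (hκ : κ ≤ ‖c‖)
    (hf : ∀ b ∈ closedBall a ε, ‖f b - f a - c * (b - a)‖ ≤ κ * ‖b - a‖) :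
    MapsTo f (closedBall a ε) (closedBall (f a) (ε * ‖c‖)) := by
  intro b hb
  rw [mem_closedBall, dist_eq_norm] at hb ⊢
  calc ‖f b - f a‖ = ‖c * (b - a) + (f b - f a - c * (b - a))‖ := by ring_nf
    _ ≤ max ‖c * (b - a)‖ ‖f b - f a - c * (b - a)‖ := IsUltrametricDist.norm_add_le_max _ _
    _ ≤ ‖c‖ * ‖b - a‖ := by
        rw [norm_mul]
        exact max_le le_rfl ((hf b (mem_closedBall_iff_norm.2 hb)).trans
          (mul_le_mul_of_nonneg_right hκ (norm_nonneg _)))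
    _ ≤ ε * ‖c‖ := by rw [mul_comm]; gcongr

variable [CompleteSpace K]

lemma bijOn_closedBall_of_norm_sub_sub_le {f : K → K} {a c : K} {ε κ : ℝ} (hκ0 : 0 ≤ κ)
    (hκ : κ < ‖c‖) (hf : ∀ b ∈ closedBall a ε, ∀ b' ∈ closedBall a ε,
      ‖f b - f b' - c * (b - b')‖ ≤ κ * ‖b - b'‖) :
    BijOn f (closedBall a ε) (closedBall (f a) (ε * ‖c‖)) := by
  have hc : c ≠ 0 := norm_pos_iff.1 (hκ0.trans_lt hκ)
  have hmaps := mapsTo_closedBall_of_norm_sub_sub_le hκ.le fun b hb =>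
    hf b hb a (mem_closedBall_self ((dist_nonneg).trans hb))
  refine ⟨hmaps, fun b hb b' hb' hbb' => ?_, fun y hy => ?_⟩
  · have h := hf b hb b' hb'
    rw [hbb', sub_self, zero_sub, norm_neg, norm_mul] at h
    by_contra hne
    exact (mul_lt_mul_of_pos_right hκ (norm_pos_iff.2 (sub_ne_zero.2 hne))).not_ge h
  -- Newton-like iteration `b ↦ b + c⁻¹ (y - f b)`, a contraction with constant `κ / ‖c‖`
  set U : K → K := fun b => b + c⁻¹ * (y - f b) with hU
  have hUmaps : MapsTo U (closedBall a ε) (closedBall a ε) := by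
    intro b hb
    rw [mem_closedBall, dist_eq_norm] at hb hy ⊢
    have hyb : ‖y - f b‖ ≤ ε * ‖c‖ := by
      rw [← sub_add_sub_cancel y (f a) (f b)]
      refine (IsUltrametricDist.norm_add_le_max _ _).trans (max_le hy ?_)
      rw [← norm_neg, neg_sub, ← dist_eq_norm]
      exact hmaps (mem_closedBall_iff_norm.2 hb)
    calc ‖U b - a‖ = ‖(b - a) + c⁻¹ * (y - f b)‖ := by rw [hU]; ring_nf
      _ ≤ max ‖b - a‖ ‖c⁻¹ * (y - f b)‖ := IsUltrametricDist.norm_add_le_max _ _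
      _ ≤ ε := max_le hb (by
          rw [norm_mul, norm_inv, inv_mul_le_iff₀ (norm_pos_iff.2 hc), mul_comm]; exact hyb)
  have hcontr : ContractingWith (κ / ‖c‖).toNNReal (hUmaps.restrict U _ _) := by
    refine ⟨by rw [Real.toNNReal_lt_one, div_lt_one (norm_pos_iff.2 hc)]; exact hκ,
      LipschitzWith.of_dist_le_mul fun b b' => ?_⟩
    rw [Subtype.dist_eq, Subtype.dist_eq, dist_eq_norm, dist_eq_norm, Real.coe_toNNReal _
      (div_nonneg hκ0 (norm_nonneg c))]
    have hUU : U b - U b' = -(c⁻¹ * (f b - f b' - c * (b - b'))) := by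
      simp only [hU]
      field_simp
      ring
    simp only [MapsTo.val_restrict_apply]
    rw [hUU, norm_neg, norm_mul, norm_inv, div_mul_eq_mul_div, inv_mul_eq_div,
      div_le_div_iff_of_pos_right (norm_pos_iff.2 hc)]
    exact hf b b.2 b' b'.2
  have hε : 0 ≤ ε := nonneg_of_mul_nonneg_left (dist_nonneg.trans hy) (norm_pos_iff.2 hc)
  obtain ⟨b, hb, hfix, -⟩ := hcontr.exists_fixedPoint' isClosed_closedBall.isComplete hUmaps
    (mem_closedBall_self hε) (edist_ne_top _ _)
  refine ⟨b, hb, ?_⟩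
  have : c⁻¹ * (y - f b) = 0 := add_eq_left.1 hfix
  exact (sub_eq_zero.1 ((mul_eq_zero.1 this).resolve_left (inv_ne_zero hc))).symm

lemma bijOn_eval_sub_closedBall (F : K[X]) {a c : K} {ε : ℝ} (hε : 0 < ε)
    (hF : ‖F - C (F.coeff 0) - C c * X‖[ε] < ε * ‖c‖) :
    BijOn (fun b => F.eval (b - a)) (closedBall a ε) (closedBall (F.coeff 0) (ε * ‖c‖)) := by
  set H := F - C (F.coeff 0) - C c * X
  have h := bijOn_closedBall_of_norm_sub_sub_le (f := fun b => F.eval (b - a)) (a := a) (c := c)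
    (ε := ε) (div_nonneg (H.gaussNorm_nonneg _ hε.le) hε.le)
    ((div_lt_iff₀ hε).2 (by rwa [mul_comm])) fun b hb b' hb' => ?_
  · simpa [← coeff_zero_eq_eval_zero] using h
  have hH : ∀ z, H.eval z = F.eval z - F.coeff 0 - c * z := fun z => by simp [H]
  calc ‖F.eval (b - a) - F.eval (b' - a) - c * (b - b')‖ = ‖H.eval (b - a) - H.eval (b' - a)‖ := by
        rw [hH, hH]; ring_nf
    _ ≤ ‖H‖[ε] / ε * ‖(b - a) - (b' - a)‖ :=
        H.norm_eval_sub_eval_le hε (mem_closedBall_iff_norm.1 hb) (mem_closedBall_iff_norm.1 hb')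
    _ = ‖H‖[ε] / ε * ‖b - b'‖ := by rw [sub_sub_sub_cancel_right]

end Bijection

section Dynamics

variable {K : Type*} [NormedField K]

/-- `T ↦ φ_{a+X}(T)`: its iterates starting from `C x` expand `b ↦ φ_b^k(x)` around `b = a`. -/
noncomputable def phiPoly (p : ℕ) (a : K) (T : K[X]) : K[X] :=
  (1 - (C a + X)) * T ^ (p + 1) + (C a + X) * T ^ p

lemma eval_phiPoly (p : ℕ) (a z : K) (T : K[X]) :
    (phiPoly p a T).eval z = phi p (a + z) (T.eval z) := by
  simp only [phiPoly, phi, eval_add, eval_mul, eval_sub, eval_one, eval_C, eval_X, eval_pow]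

lemma eval_iterate_phiPoly (p : ℕ) (a x z : K) (k : ℕ) :
    ((phiPoly p a)^[k] (C x)).eval z = (phi p (a + z))^[k] x := by
  induction k with
  | zero => simp
  | succ k ih => rw [Function.iterate_succ_apply', Function.iterate_succ_apply', eval_phiPoly, ih]

lemma coeff_zero_phiPoly (p : ℕ) (a : K) (T : K[X]) :
    (phiPoly p a T).coeff 0 = phi p a (T.coeff 0) := by
  rw [coeff_zero_eq_eval_zero, eval_phiPoly, add_zero, coeff_zero_eq_eval_zero]

variable [IsUltrametricDist K]

lemma norm_one_sub_of_norm_lt_one {s : K} (hs : ‖s‖ < 1) : ‖1 - s‖ = 1 := by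
  rw [sub_eq_add_neg, IsUltrametricDist.norm_add_eq_max_of_norm_ne_norm (by simpa using hs.ne'),
    norm_one, norm_neg, max_eq_left hs.le]

lemma norm_phi_of_norm_lt_one (p : ℕ) {a s : K} (ha : 1 < ‖a‖) (hs : ‖s‖ < 1) :
    ‖phi p a s‖ = ‖a‖ * ‖s‖ ^ p := by
  have h : ‖s‖ < ‖a * (1 - s)‖ := by
    rw [norm_mul, norm_one_sub_of_norm_lt_one hs, mul_one]; linarith
  rw [show phi p a s = s ^ p * (s + a * (1 - s)) by simp only [phi]; ring, norm_mul, norm_pow,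
    IsUltrametricDist.norm_add_eq_max_of_norm_ne_norm h.ne, max_eq_right h.le, norm_mul,
    norm_one_sub_of_norm_lt_one hs, mul_one, mul_comm]

variable {e r D : ℝ} {s : K} {U : K[X]}

lemma gaussNorm_pow_sub_sub_le (he : 0 ≤ e) (hs : ‖s‖ ≤ r) (hU : ‖U‖[e] ≤ D) (hDr : D ≤ r)
    (q : ℕ) : ‖(C s + U) ^ (q + 2) - C (s ^ (q + 2)) - C ((q + 2 : K) * s ^ (q + 1)) * U‖[e] ≤
      r ^ q * D ^ 2 := by
  have hD : 0 ≤ D := (U.gaussNorm_nonneg _ he).trans hU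
  have hr : 0 ≤ r := (norm_nonneg s).trans hs
  have hU2 : ‖U ^ 2‖[e] ≤ D ^ 2 := by
    rw [sq, sq]
    exact (gaussNorm_mul_le' he U U).trans (mul_le_mul hU hU (U.gaussNorm_nonneg _ he) hD)
  have hT : ‖C s + U‖[e] ≤ r := (gaussNorm_add_le he _ _).trans
    (max_le ((gaussNorm_C_eq_norm s).trans_le hs) (hU.trans hDr))
  induction q with
  | zero =>
    convert hU2 using 2
    · simp only [map_mul, map_pow, map_add, map_ofNat, map_zero, Nat.cast_zero]
      ring
    · ring
  | succ q ih =>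
    have hq : ‖((q + 2 : ℕ) : K) * s ^ (q + 1)‖ ≤ r ^ (q + 1) := by
      rw [norm_mul, norm_pow]
      exact (mul_le_mul (IsUltrametricDist.norm_natCast_le_one K _)
        (pow_le_pow_left₀ (norm_nonneg s) hs _) (by positivity) zero_le_one).trans_eq (one_mul _)
    have hsplit : (C s + U) ^ (q + 1 + 2) - C (s ^ (q + 1 + 2)) -
        C (((q + 1 : ℕ) + 2 : K) * s ^ (q + 1 + 1)) * U =
        C (((q + 2 : ℕ) : K) * s ^ (q + 1)) * U ^ 2 +
          ((C s + U) ^ (q + 2) - C (s ^ (q + 2)) - C ((q + 2 : K) * s ^ (q + 1)) * U) *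
            (C s + U) := by
      simp only [map_mul, map_pow, map_add, map_natCast, map_ofNat, map_one, Nat.cast_add,
        Nat.cast_one]
      ring
    rw [hsplit]
    refine (gaussNorm_add_le he _ _).trans (max_le ?_ ?_)
    · refine (gaussNorm_mul_le' he _ _).trans ?_
      rw [gaussNorm_C_eq_norm]
      exact mul_le_mul hq hU2 (gaussNorm_nonneg _ _ he) (pow_nonneg hr _)
    · refine (gaussNorm_mul_le' he _ _).trans ?_
      calc _ ≤ r ^ q * D ^ 2 * r := mul_le_mul ih hT (gaussNorm_nonneg _ _ he) (by positivity)
        _ = r ^ (q + 1) * D ^ 2 := by ring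

lemma gaussNorm_pow_sub_le (he : 0 ≤ e) (hs : ‖s‖ ≤ r) (hU : ‖U‖[e] ≤ D) (hDr : D ≤ r) (q : ℕ) :
    ‖(C s + U) ^ (q + 2) - C (s ^ (q + 2))‖[e] ≤
      r ^ q * max (‖((q + 2 : ℕ) : K)‖ * r * D) (D ^ 2) := by
  have hr : 0 ≤ r := (norm_nonneg s).trans hs
  have hD : 0 ≤ D := (U.gaussNorm_nonneg _ he).trans hU
  have hlin : ‖C (((q + 2 : ℕ) : K) * s ^ (q + 1)) * U‖[e] ≤
      r ^ q * (‖((q + 2 : ℕ) : K)‖ * r * D) := by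
    refine (gaussNorm_mul_le' he _ _).trans ?_
    rw [gaussNorm_C_eq_norm, norm_mul, norm_pow]
    calc _ ≤ ‖((q + 2 : ℕ) : K)‖ * r ^ (q + 1) * D := by
          gcongr
          exact U.gaussNorm_nonneg _ he
      _ = _ := by ring
  rw [show (C s + U) ^ (q + 2) - C (s ^ (q + 2)) = C (((q + 2 : ℕ) : K) * s ^ (q + 1)) * U +
      ((C s + U) ^ (q + 2) - C (s ^ (q + 2)) - C ((q + 2 : K) * s ^ (q + 1)) * U) by
    push_cast; ring, mul_max_of_nonneg _ _ (pow_nonneg hr q)]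
  exact (gaussNorm_add_le he _ _).trans
    (max_le_max hlin (gaussNorm_pow_sub_sub_le he hs hU hDr q))

lemma gaussNorm_pow_sub_le_mul_max {p n : ℕ} (hp : 2 ≤ p) (hn : n = p ∨ n = p + 1) (he : 0 ≤ e)
    (hs : ‖s‖ ≤ r) (hr : r ≤ 1) (hU : ‖U‖[e] ≤ D) (hD : D ≤ r * max r ‖(p : K)‖) :
    ‖(C s + U) ^ n - C (s ^ n)‖[e] ≤ r ^ (p - 1) * max r ‖(p : K)‖ * D := by
  obtain ⟨q, rfl⟩ : ∃ q, p = q + 2 := ⟨p - 2, by omega⟩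
  set M := max r ‖((q + 2 : ℕ) : K)‖
  have hr0 : 0 ≤ r := (norm_nonneg s).trans hs
  have hD0 : 0 ≤ D := (U.gaussNorm_nonneg _ he).trans hU
  have hM : M ≤ 1 := max_le hr (IsUltrametricDist.norm_natCast_le_one K _)
  have hDr : D ≤ r := hD.trans (mul_le_of_le_one_right hr0 hM)
  rw [show q + 2 - 1 = q + 1 by omega]
  rcases hn with rfl | rfl
  · refine (gaussNorm_pow_sub_le he hs hU hDr q).trans ?_
    calc _ ≤ r ^ q * (r * M * D) := by
          gcongr
          refine max_le (mul_le_mul_of_nonneg_right ?_ hD0) ?_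
          · rw [mul_comm]
            exact mul_le_mul_of_nonneg_left (le_max_right _ _) hr0
          · rw [sq]
            exact mul_le_mul_of_nonneg_right hD hD0
      _ = _ := by ring
  · refine (gaussNorm_pow_sub_le he hs hU hDr (q + 1)).trans ?_
    calc _ ≤ r ^ (q + 1) * (M * D) := by
          gcongr
          refine max_le (mul_le_mul_of_nonneg_right ?_ hD0) ?_
          · exact (mul_le_of_le_one_left hr0 (IsUltrametricDist.norm_natCast_le_one K _)).trans
              (le_max_left _ _)
          · rw [sq]
            exact mul_le_mul_of_nonneg_right
              (hD.trans (mul_le_of_le_one_left (hr0.trans (le_max_left _ _)) hr)) hD0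
      _ = _ := by ring

lemma gaussNorm_phiPoly_sub_le {p : ℕ} (hp : 2 ≤ p) {a : K} (ha : 1 ≤ ‖a‖) (he : 0 ≤ e)
    (hea : e ≤ ‖a‖) (hs : ‖s‖ ≤ r) (hr : r ≤ 1) (hU : ‖U‖[e] ≤ D)
    (hD : D ≤ r * max r ‖(p : K)‖) :
    ‖phiPoly p a (C s + U) - C (phi p a s) - C (s ^ p * (1 - s)) * X‖[e] ≤
      ‖a‖ * r ^ (p - 1) * max r ‖(p : K)‖ * D := by
  have hlin : ‖C a + X‖[e] ≤ ‖a‖ :=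
    (gaussNorm_add_le he _ _).trans (max_le (gaussNorm_C_eq_norm a).le (gaussNorm_X.trans_le hea))
  have hone : ‖1 - (C a + X)‖[e] ≤ ‖a‖ := by
    refine (gaussNorm_sub_le he _ _).trans (max_le ?_ hlin)
    rwa [← C_1, gaussNorm_C_eq_norm, norm_one]
  have hV := fun n hn => gaussNorm_pow_sub_le_mul_max (n := n) hp hn he hs hr hU hD
  rw [show phiPoly p a (C s + U) - C (phi p a s) - C (s ^ p * (1 - s)) * X =
      (1 - (C a + X)) * ((C s + U) ^ (p + 1) - C (s ^ (p + 1))) +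
        (C a + X) * ((C s + U) ^ p - C (s ^ p)) by
    simp only [phiPoly, phi, map_add, map_sub, map_mul, map_pow, map_one]; ring,
    mul_assoc, mul_assoc, ← mul_assoc (r ^ (p - 1))]
  refine (gaussNorm_add_le he _ _).trans (max_le ?_ ?_) <;>
    refine (gaussNorm_mul_le' he _ _).trans ?_
  · exact mul_le_mul hone (hV _ (.inr rfl)) (gaussNorm_nonneg _ _ he) (norm_nonneg a)
  · exact mul_le_mul hlin (hV _ (.inl rfl)) (gaussNorm_nonneg _ _ he) (norm_nonneg a)

lemma gaussNorm_phiPoly_sub_coeff_zero_le {p : ℕ} (hp : 2 ≤ p) {a : K} (ha : 1 < ‖a‖)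
    (he : 0 ≤ e) (hea : e ≤ ‖a‖) {T : K[X]} (hT0 : ‖T.coeff 0‖ = r) (hr : r < 1)
    (hT : ‖T - C (T.coeff 0)‖[e] ≤ D) (hD : D ≤ r * max r ‖(p : K)‖) :
    ‖(phiPoly p a T).coeff 0‖ = ‖a‖ * r ^ p ∧
      ‖phiPoly p a T - C ((phiPoly p a T).coeff 0)‖[e] ≤
        max (‖a‖ * r ^ (p - 1) * max r ‖(p : K)‖ * D) (e * r ^ p) := by
  have hs : ‖T.coeff 0‖ < 1 := hT0 ▸ hr
  have hstep := gaussNorm_phiPoly_sub_le hp ha.le he hea hT0.le hr.le hT hD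
  rw [add_sub_cancel] at hstep
  refine ⟨by rw [coeff_zero_phiPoly, norm_phi_of_norm_lt_one p ha hs, hT0], ?_⟩
  rw [coeff_zero_phiPoly,
    ← sub_add_cancel (phiPoly p a T - _) (C (T.coeff 0 ^ p * (1 - T.coeff 0)) * X)]
  refine (gaussNorm_add_le he _ _).trans (max_le_max hstep ((gaussNorm_mul_le' he _ _).trans ?_))
  rw [gaussNorm_C_eq_norm, gaussNorm_X, norm_mul, norm_pow, norm_one_sub_of_norm_lt_one hs, hT0,
    mul_one, mul_comm]

lemma iterate_phiPoly_bound {p m : ℕ} (hp : 2 ≤ p) {a : K} (ha : 1 < ‖a‖) (he : 0 ≤ e)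
    (hea : e ≤ ‖a‖) {r D : ℕ → ℝ} (hr : ∀ k, ‖a‖ * r k ^ p = r (k + 1)) (hr1 : ∀ k < m, r k < 1)
    (hDr : ∀ k < m, D k ≤ r k * max (r k) ‖(p : K)‖)
    (hD : ∀ k < m, max (‖a‖ * r k ^ (p - 1) * max (r k) ‖(p : K)‖ * D k) (e * r k ^ p) ≤ D (k + 1))
    {T : K[X]} (hT0 : ‖T.coeff 0‖ = r 0) (hT : ‖T - C (T.coeff 0)‖[e] ≤ D 0) {k : ℕ}
    (hk : k ≤ m) : ‖((phiPoly p a)^[k] T).coeff 0‖ = r k ∧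
      ‖(phiPoly p a)^[k] T - C (((phiPoly p a)^[k] T).coeff 0)‖[e] ≤ D k := by
  induction k with
  | zero => exact ⟨hT0, hT⟩
  | succ k ih =>
    have hkm : k < m := hk
    obtain ⟨ih0, ih⟩ := ih hkm.le
    obtain ⟨h0, h⟩ :=
      gaussNorm_phiPoly_sub_coeff_zero_le hp ha he hea ih0 (hr1 k hkm) ih (hDr k hkm)
    rw [Function.iterate_succ_apply']
    exact ⟨h0.trans (hr k), h.trans (hD k hkm)⟩

end Dynamics

section Radii

variable {p m : ℕ} {R : ℝ}

/-- The size of `φ_a^{n+k}(x)`. -/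
noncomputable def orbitRadius (R : ℝ) (p m k : ℕ) : ℝ := R ^ (1 - (p : ℝ) ^ ((k : ℤ) - m))

lemma mul_rpow_neg_one_div_pow_sub_one {α : ℝ} (hα : 0 < α) (hp : 2 ≤ p) :
    α * (α ^ (-1 / ((p : ℝ) - 1))) ^ (p - 1) = 1 := by
  have hp1 : ((p - 1 : ℕ) : ℝ) = (p : ℝ) - 1 := by push_cast [show 1 ≤ p by omega]; ring
  rw [← Real.rpow_natCast, ← Real.rpow_mul hα.le, hp1,
    div_mul_cancel₀ _ (by rw [← hp1]; exact_mod_cast (show p - 1 ≠ 0 by omega)),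
    Real.rpow_neg_one, mul_inv_cancel₀ hα.ne']

lemma orbitRadius_self : orbitRadius R p m m = 1 := by simp [orbitRadius]

lemma le_orbitRadius (hR : 0 < R) (hR1 : R ≤ 1) (k : ℕ) : R ≤ orbitRadius R p m k := by
  have ht : 0 ≤ (p : ℝ) ^ ((k : ℤ) - m) := zpow_nonneg (Nat.cast_nonneg p) _
  calc R = R ^ (1 : ℝ) := (Real.rpow_one R).symm
    _ ≤ orbitRadius R p m k := Real.rpow_le_rpow_of_exponent_ge hR hR1 (by linarith)

lemma orbitRadius_lt_one (hp : 2 ≤ p) (hR : 0 < R) (hR1 : R < 1) {k : ℕ} (hk : k < m) :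
    orbitRadius R p m k < 1 := by
  refine Real.rpow_lt_one hR.le hR1 (sub_pos.2 (zpow_lt_one_of_neg₀ ?_ (by omega)))
  exact_mod_cast hp

lemma orbitRadius_succ {α : ℝ} (hp : 1 ≤ p) (hR : 0 < R) (hαR : α * R ^ (p - 1) = 1) (k : ℕ) :
    α * orbitRadius R p m k ^ p = orbitRadius R p m (k + 1) := by
  have hp0 : (p : ℝ) ≠ 0 := by positivity
  rw [orbitRadius, orbitRadius, ← Real.rpow_natCast, ← Real.rpow_mul hR.le,
    show ((k + 1 : ℕ) : ℤ) - m = ((k : ℤ) - m) + 1 by push_cast; ring, zpow_add_one₀ hp0,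
    show (1 - (p : ℝ) ^ ((k : ℤ) - m)) * p = (p - 1 : ℕ) + (1 - (p : ℝ) ^ ((k : ℤ) - m) * p) by
      push_cast [hp]; ring,
    Real.rpow_add hR, Real.rpow_natCast, ← mul_assoc, hαR, one_mul]

end Radii

section Estimates

variable {p k : ℕ} {α R μ π ρ A ε : ℝ}

lemma gain_mul_weight_le (hp : 2 ≤ p) (hR : 0 < R) (hRρ : R ≤ ρ) (hαR : α * R ^ (p - 1) = 1)
    (hπ : π ≤ μ) (hRμ : R ≤ μ) :
    α * ρ ^ (p - 1) * max ρ π * (μ ^ k * (ρ / R) ^ 2) ≤ μ ^ (k + 1) * (α * ρ ^ p / R) ^ 2 := by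
  obtain ⟨q, rfl⟩ : ∃ q, p = q + 2 := ⟨p - 2, by omega⟩
  rw [show q + 2 - 1 = q + 1 by omega] at hαR ⊢
  have hρ : 0 < ρ := hR.trans_le hRρ
  have hα : 0 < α := pos_of_mul_pos_left (hαR ▸ one_pos) (by positivity)
  have hμ : 0 ≤ μ := hR.le.trans hRμ
  have hmax : max ρ π ≤ μ * ρ / R := by
    refine max_le ?_ ?_ <;> rw [le_div_iff₀ hR]
    · nlinarith [mul_le_mul_of_nonneg_left hRμ hρ.le]
    · nlinarith [mul_le_mul_of_nonneg_right hπ hR.le, mul_le_mul_of_nonneg_left hRρ hμ]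
  have hsq : ρ ^ 2 ≤ R * (α * ρ ^ (q + 2)) :=
    calc ρ ^ 2 = ρ ^ 2 * (α * (R * R ^ q)) := by rw [← pow_succ', hαR, mul_one]
      _ ≤ ρ ^ 2 * (α * (R * ρ ^ q)) := by gcongr
      _ = R * (α * ρ ^ (q + 2)) := by ring
  calc α * ρ ^ (q + 1) * max ρ π * (μ ^ k * (ρ / R) ^ 2)
      ≤ α * ρ ^ (q + 1) * (μ * ρ / R) * (μ ^ k * (ρ / R) ^ 2) := by gcongr
    _ = μ ^ (k + 1) * (α * ρ ^ (q + 2)) * ρ ^ 2 / R ^ 3 := by field_simp; ring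
    _ ≤ μ ^ (k + 1) * (α * ρ ^ (q + 2)) * (R * (α * ρ ^ (q + 2))) / R ^ 3 := by gcongr
    _ = μ ^ (k + 1) * (α * ρ ^ (q + 2) / R) ^ 2 := by field_simp

/-- The bound `D_k` for `‖F_k - F_k(0)‖[ε]` when `‖F_k(0)‖ = ρ`: the first term is the initial
error `A ε` amplified by the first `k` steps, the second the linear term created by the last one. -/
noncomputable def orbitBound (A ε α μ R : ℝ) (k : ℕ) (ρ : ℝ) : ℝ :=
  max (A * ε * (μ ^ k * (ρ / R) ^ 2)) (ε * ρ / α)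

lemma orbitBound_le_mul_max (hR : 0 < R) (hRρ : R ≤ ρ) (hρ1 : ρ ≤ 1) (hμ : μ = max π R)
    (hμ1 : μ ≤ 1) (hα : 0 < α) (hAε : A * ε ≤ μ * R ^ 3) (hεα : ε ≤ α * μ) :
    orbitBound A ε α μ R k ρ ≤ ρ * max ρ π := by
  have hρ : 0 < ρ := hR.trans_le hRρ
  have hμ0 : 0 ≤ μ := hμ ▸ hR.le.trans (le_max_right _ _)
  have hμρ : μ ≤ max ρ π := hμ ▸ max_le (le_max_right _ _) (hRρ.trans (le_max_left _ _))
  have hμρ' : μ * ρ ≤ ρ * max ρ π := by rw [mul_comm]; gcongr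
  refine max_le ?_ (le_trans ?_ hμρ')
  · calc A * ε * (μ ^ k * (ρ / R) ^ 2) ≤ μ * R ^ 3 * (μ ^ k * (ρ / R) ^ 2) := by gcongr
      _ = μ * ρ * (R * (μ ^ k * ρ)) := by field_simp
      _ ≤ μ * ρ * (1 * 1) := by
          gcongr
          · exact hRρ.trans hρ1
          · exact mul_le_one₀ (pow_le_one₀ hμ0 hμ1) hρ.le hρ1
      _ ≤ ρ * max ρ π := by rw [mul_one, mul_one]; exact hμρ'
  · rw [div_le_iff₀ hα]
    nlinarith

lemma max_gain_mul_orbitBound_le (hp : 2 ≤ p) (hR : 0 < R) (hRρ : R ≤ ρ) (hρ1 : ρ ≤ 1)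
    (hαR : α * R ^ (p - 1) = 1) (hπ : π ≤ μ) (hπ1 : π ≤ 1) (hRμ : R ≤ μ) (hε : 0 ≤ ε)
    (hA : 0 ≤ A) :
    max (α * ρ ^ (p - 1) * max ρ π * orbitBound A ε α μ R k ρ) (ε * ρ ^ p) ≤
      orbitBound A ε α μ R (k + 1) (α * ρ ^ p) := by
  have hρ : 0 < ρ := hR.trans_le hRρ
  have hα : 0 < α := pos_of_mul_pos_left (hαR ▸ one_pos) (by positivity)
  have hρp : ρ ^ (p - 1) * ρ = ρ ^ p := pow_sub_one_mul (by omega) ρ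
  have hM0 : 0 ≤ max ρ π := hρ.le.trans (le_max_left _ _)
  rw [orbitBound, orbitBound, mul_max_of_nonneg _ _ (by positivity)]
  refine max_le (max_le (le_max_of_le_left ?_) (le_max_of_le_right ?_)) (le_max_of_le_right ?_)
  · calc _ = A * ε * (α * ρ ^ (p - 1) * max ρ π * (μ ^ k * (ρ / R) ^ 2)) := by ring
      _ ≤ A * ε * (μ ^ (k + 1) * (α * ρ ^ p / R) ^ 2) :=
          mul_le_mul_of_nonneg_left (gain_mul_weight_le hp hR hRρ hαR hπ hRμ) (by positivity)
  · calc _ = ε * (α * ρ ^ p) / α * max ρ π := by rw [← hρp]; field_simp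
      _ ≤ ε * (α * ρ ^ p) / α := mul_le_of_le_one_right (by positivity) (max_le hρ1 hπ1)
  · field_simp
    rfl

lemma gain_mul_orbitBound_lt (hp : 2 ≤ p) (hR : 0 < R) (hRρ : R ≤ ρ) (hαR : α * R ^ (p - 1) = 1)
    (hαρ : α * ρ ^ p = 1) (hπ : π ≤ μ) (hRμ : R ≤ μ) (hM : max ρ π < 1) (hε : 0 < ε) (hA : 0 ≤ A)
    (hAμ : A * μ ^ (k + 1) < R ^ (p + 1)) :
    α * ρ ^ (p - 1) * max ρ π * orbitBound A ε α μ R k ρ < ε / α := by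
  have hρ : 0 < ρ := hR.trans_le hRρ
  have hα : 0 < α := pos_of_mul_pos_left (hαR ▸ one_pos) (by positivity)
  have hρp : ρ ^ (p - 1) * ρ = ρ ^ p := pow_sub_one_mul (by omega) ρ
  have hRp : R ^ (p - 1) * R ^ 2 = R ^ (p + 1) := by rw [← pow_add]; congr 1; omega
  have hW := gain_mul_weight_le (k := k) hp hR hRρ hαR hπ hRμ
  rw [hαρ] at hW
  rw [orbitBound, mul_max_of_nonneg _ _ (by positivity)]
  refine max_lt ?_ ?_
  · calc _ = A * ε * (α * ρ ^ (p - 1) * max ρ π * (μ ^ k * (ρ / R) ^ 2)) := by ring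
      _ ≤ A * ε * (μ ^ (k + 1) * (1 / R) ^ 2) := by gcongr
      _ = ε * (A * μ ^ (k + 1)) / R ^ 2 := by ring
      _ < ε * R ^ (p + 1) / R ^ 2 := by gcongr
      _ = ε / α := by
          rw [← hRp, show R ^ (p - 1) = 1 / α by rw [eq_div_iff hα.ne', mul_comm, hαR]]
          field_simp
  · calc _ = ε * (α * ρ ^ p) / α * max ρ π := by rw [← hρp]; field_simp
      _ < ε * (α * ρ ^ p) / α * 1 := by gcongr
      _ = ε / α := by rw [hαρ, mul_one, mul_one]

end Estimates

section KeyEstimate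

variable {K : Type*} [NormedField K] [IsUltrametricDist K]

lemma iterate_phiPoly_orbitBound {p m : ℕ} (hp : 2 ≤ p) (hpK : ‖(p : K)‖ < 1) {a : K}
    (ha : 1 < ‖a‖) {R μ A ε : ℝ} (hR : 0 < R) (hR1 : R < 1) (haR : ‖a‖ * R ^ (p - 1) = 1)
    (hμ : μ = max ‖(p : K)‖ R) (hA : 0 ≤ A) (hε : 0 ≤ ε) (hAε : A * ε ≤ μ * R ^ 3)
    (hεa : ε ≤ ‖a‖ * μ) {T : K[X]} (hT0 : ‖T.coeff 0‖ = orbitRadius R p m 0)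
    (hT : ‖T - C (T.coeff 0)‖[ε] ≤ A * ε) {k : ℕ} (hk : k ≤ m) :
    ‖((phiPoly p a)^[k] T).coeff 0‖ = orbitRadius R p m k ∧
      ‖(phiPoly p a)^[k] T - C (((phiPoly p a)^[k] T).coeff 0)‖[ε] ≤
        orbitBound A ε ‖a‖ μ R k (orbitRadius R p m k) := by
  have hRμ : R ≤ μ := hμ ▸ le_max_right _ _
  have hμ1 : μ ≤ 1 := hμ ▸ max_le hpK.le hR1.le
  set r := orbitRadius R p m
  have hr : ∀ k, ‖a‖ * r k ^ p = r (k + 1) := orbitRadius_succ (by omega) hR haR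
  have hRr : ∀ k, R ≤ r k := le_orbitRadius hR hR1.le
  have hr1 : ∀ k < m, r k < 1 := fun k hk => orbitRadius_lt_one hp hR hR1 hk
  refine iterate_phiPoly_bound (D := fun k => orbitBound A ε ‖a‖ μ R k (r k)) hp ha hε
    (hεa.trans (mul_le_of_le_one_right (by positivity) hμ1))
    hr hr1 (fun k hk => ?_) (fun k hk => ?_) hT0 (hT.trans ?_) hk
  · exact orbitBound_le_mul_max hR (hRr k) (hr1 k hk).le hμ hμ1 (by positivity) hAε hεa
  · rw [← hr k]
    exact max_gain_mul_orbitBound_le hp hR (hRr k) (hr1 k hk).le haR (hμ ▸ le_max_left _ _)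
      hpK.le hRμ hε hA
  · refine le_max_of_le_left ?_
    rw [pow_zero, one_mul]
    exact le_mul_of_one_le_right (by positivity) (one_le_pow₀ ((one_le_div hR).2 (hRr 0)))

theorem exists_gaussNorm_iterate_phiPoly_sub_lt {p m : ℕ} (hp : 2 ≤ p) (hpK : ‖(p : K)‖ < 1)
    {a : K} (ha : 1 < ‖a‖) {R μ A ε : ℝ} (hR : 0 < R) (hR1 : R < 1) (haR : ‖a‖ * R ^ (p - 1) = 1)
    (hμ : μ = max ‖(p : K)‖ R) (hA : ‖a‖⁻¹ < A) (hε : 0 < ε) (hε' : ε ≤ A⁻¹ * (μ * R ^ 3))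
    (hm : 1 ≤ m) (hμm : μ ^ m < A⁻¹ * R ^ (p + 1)) {T : K[X]}
    (hT0 : ‖T.coeff 0‖ = orbitRadius R p m 0) (hT : ‖T - C (T.coeff 0)‖[ε] ≤ A * ε) :
    ∃ c : K, ‖c‖ = ‖a‖⁻¹ ∧
      ‖(phiPoly p a)^[m] T - C (((phiPoly p a)^[m] T).coeff 0) - C c * X‖[ε] < ε * ‖c‖ := by
  have ha0 : 0 < ‖a‖ := one_pos.trans ha
  have hA0 : 0 < A := (inv_pos.2 ha0).trans hA
  have hRμ : R ≤ μ := hμ ▸ le_max_right _ _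
  have hμ1 : μ ≤ 1 := hμ ▸ max_le hpK.le hR1.le
  have hAε : A * ε ≤ μ * R ^ 3 := (le_inv_mul_iff₀ hA0).1 hε'
  have hεa : ε ≤ ‖a‖ * μ := hε'.trans <| mul_le_mul ((inv_lt_comm₀ ha0 hA0).1 hA).le
    (mul_le_of_le_one_right (hR.le.trans hRμ) (pow_le_one₀ hR.le hR1.le))
    (mul_nonneg (hR.le.trans hRμ) (pow_nonneg hR.le 3)) ha0.le
  have hm1 : m - 1 < m := by omega
  obtain ⟨h0, hbound⟩ := iterate_phiPoly_orbitBound hp hpK ha hR hR1 haR hμ hA0.le hε.le hAε hεa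
    hT0 hT hm1.le
  set S := (phiPoly p a)^[m - 1] T
  set ρ := orbitRadius R p m (m - 1)
  have hρ1 : ρ < 1 := orbitRadius_lt_one hp hR hR1 hm1
  have hRρ : R ≤ ρ := le_orbitRadius hR hR1.le _
  have hlast : ‖a‖ * ρ ^ p = 1 := by
    rw [orbitRadius_succ (by omega) hR haR, Nat.sub_add_cancel hm, orbitRadius_self]
  have hc : ‖S.coeff 0 ^ p * (1 - S.coeff 0)‖ = ‖a‖⁻¹ := by
    rw [norm_mul, norm_pow, norm_one_sub_of_norm_lt_one (h0 ▸ hρ1), mul_one, h0]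
    exact eq_inv_of_mul_eq_one_right hlast
  refine ⟨_, hc, ?_⟩
  have hstep := gaussNorm_phiPoly_sub_le hp ha.le hε.le
    (hεa.trans (mul_le_of_le_one_right ha0.le hμ1)) h0.le hρ1.le hbound
    (orbitBound_le_mul_max hR hRρ hρ1.le hμ hμ1 ha0 hAε hεa)
  rw [add_sub_cancel] at hstep
  rw [hc, ← div_eq_mul_inv, ← Nat.sub_add_cancel hm, Function.iterate_succ_apply',
    coeff_zero_phiPoly]
  refine hstep.trans_lt (gain_mul_orbitBound_lt hp hR hRρ haR hlast (hμ ▸ le_max_left _ _) hRμ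
    (max_lt hρ1 hpK) hε hA0.le ?_)
  rw [Nat.sub_add_cancel hm]
  exact (lt_inv_mul_iff₀ hA0).1 hμm

end KeyEstimate

/-- Parameter-variation lemma just outside `D̄_R(0)`: if `|φ_a^n(x)| = R^{1-p^{-m}}`,
`A > |a|^{-1}`, `0 < ε ≤ A^{-1}S`, the image `{φ_b^n(x) : b ∈ D̄_ε(a)}` is contained in
`D̄_{Aε}(φ_a^n(x))`, and `μ^m < A^{-1}R^{p+1}`, then `b ↦ φ_b^{n+m}(x)` maps `D̄_ε(a)`
bijectively onto `D̄_{ε/|a|}(φ_a^{n+m}(x))`. -/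
theorem parameter_variation_shrinking
    {K : Type*} [NontriviallyNormedField K] [IsUltrametricDist K]
    [CompleteSpace K] [IsAlgClosed K]
    (p : ℕ) (hp : p.Prime) (hpK : ‖(p : K)‖ < 1)
    (a : K) (ha : 1 < ‖a‖) (R μ S : ℝ)
    (hR : R = ‖a‖ ^ (-(1 : ℝ) / ((p : ℝ) - 1)))
    (hμ : μ = max ‖(p : K)‖ R) (hS : S = μ * R ^ 3)
    (m n : ℕ) (hm : 1 ≤ m) (x : K)
    (hx : ‖(phi p a)^[n] x‖ = R ^ ((1 : ℝ) - (p : ℝ) ^ (-(m : ℤ))))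
    (A : ℝ) (hA : ‖a‖⁻¹ < A) (ε : ℝ) (hε : 0 < ε) (hε' : ε ≤ A⁻¹ * S)
    (him : (fun b => (phi p b)^[n] x) '' Metric.closedBall a ε ⊆
      Metric.closedBall ((phi p a)^[n] x) (A * ε))
    (hμm : μ ^ m < A⁻¹ * R ^ (p + 1)) :
    Set.BijOn (fun b => (phi p b)^[n + m] x) (Metric.closedBall a ε)
      (Metric.closedBall ((phi p a)^[n + m] x) (ε / ‖a‖)) := by
  have hp2 : 2 ≤ p := hp.two_le
  have ha0 : 0 < ‖a‖ := one_pos.trans ha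
  have hR0 : 0 < R := hR ▸ Real.rpow_pos_of_pos ha0 _
  have hR1 : R < 1 := hR ▸ Real.rpow_lt_one_of_one_lt_of_neg ha
    (div_neg_of_neg_of_pos (by norm_num) (by norm_num; exact_mod_cast hp.one_lt))
  have haR : ‖a‖ * R ^ (p - 1) = 1 := hR ▸ mul_rpow_neg_one_div_pow_sub_one ha0 hp2
  set T := (phiPoly p a)^[n] (C x)
  have hT0 : ‖T.coeff 0‖ = orbitRadius R p m 0 := by
    rw [coeff_zero_eq_eval_zero, eval_iterate_phiPoly, add_zero, hx, orbitRadius]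
    norm_num
  have hT : ‖T - C (T.coeff 0)‖[ε] ≤ A * ε := by
    refine gaussNorm_le_of_norm_eval_le _ hε fun z hz => ?_
    rw [eval_sub, eval_C, coeff_zero_eq_eval_zero, eval_iterate_phiPoly, eval_iterate_phiPoly,
      add_zero, ← dist_eq_norm]
    exact him ⟨a + z, by rwa [mem_closedBall, dist_eq_norm, add_sub_cancel_left], rfl⟩
  obtain ⟨c, hc, hH⟩ := exists_gaussNorm_iterate_phiPoly_sub_lt hp2 hpK ha hR0 hR1 haR hμ hA hε
    (hS ▸ hε') hm hμm hT0 hT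
  have hbij := bijOn_eval_sub_closedBall _ (a := a) hε hH
  rw [hc, ← div_eq_mul_inv, ← Function.iterate_add_apply, coeff_zero_eq_eval_zero,
    eval_iterate_phiPoly, add_zero, add_comm m n] at hbij
  convert hbij using 2 with b
  rw [eval_iterate_phiPoly, add_sub_cancel]
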